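/- arXiv:1709.07221 — 3 statements merged into one kernel-verified Lean document; each statement's English description precedes it below -/
import Mathlib

section
/- Let q be a prime power and n a positive integer. If q is even or q ≡ 1 (mod 4), assume n is even; if q ≡ 3 (mod 4), assume 4 divides n. Then there exists a linear code E ⊆ F_q^n with E = E^⊥ (a self-dual code) with respect to the standard bilinear form. -/
/-- The dual code of a linear code `C ⊆ F_q^n` with respect to the standard
bilinear form `⟨x,y⟩ = ∑ i, x i * y i`. -/
def dualCode {F : Type*} [Field F] {n : ℕ} (C : Submodule F (Fin n → F)) :
    Submodule F (Fin n → F) where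
  carrier := {y | ∀ x ∈ C, ∑ i, y i * x i = 0}
  add_mem' := by
    intro a b ha hb x hx
    simp only [Pi.add_apply, add_mul, Finset.sum_add_distrib, ha x hx, hb x hx, add_zero]
  zero_mem' := by
    intro x hx
    simp
  smul_mem' := by
    intro c a ha x hx
    simp only [Pi.smul_apply, smul_eq_mul, mul_assoc, ← Finset.mul_sum, ha x hx, mul_zero]

/-- The standard dot-product bilinear form on `Fin n → F`. -/
noncomputable def stdForm (F : Type*) [Field F] (n : ℕ) :
    LinearMap.BilinForm F (Fin n → F) :=
  LinearMap.mk₂ F (fun x y => ∑ i, x i * y i)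
    (by intro x x' y; simp [add_mul, Finset.sum_add_distrib])
    (by intro c x y; simp [Finset.mul_sum, mul_assoc])
    (by intro x y y'; simp [mul_add, Finset.sum_add_distrib])
    (by intro c x y; simp [Finset.mul_sum]; congr 1; funext i; ring)

lemma stdForm_apply {F : Type*} [Field F] {n : ℕ} (x y : Fin n → F) :
    stdForm F n x y = ∑ i, x i * y i := rfl

lemma stdForm_isRefl {F : Type*} [Field F] {n : ℕ} : (stdForm F n).IsRefl := by
  intro x y h
  rw [stdForm_apply] at h ⊢
  rw [← h]
  exact Finset.sum_congr rfl fun i _ => mul_comm _ _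

lemma stdForm_nondegenerate {F : Type*} [Field F] {n : ℕ} :
    (stdForm F n).Nondegenerate := by
  refine (LinearMap.IsRefl.nondegenerate_iff_separatingLeft (B := stdForm F n) fun x y h => stdForm_isRefl x y h).2 ?_
  intro x hx
  funext i
  have := hx (Pi.single i 1)
  rw [stdForm_apply] at this
  simpa [Pi.single_apply, mul_ite, Finset.sum_ite_eq'] using this

lemma dualCode_eq_orthogonal {F : Type*} [Field F] {n : ℕ} (C : Submodule F (Fin n → F)) :
    dualCode C = (stdForm F n).orthogonal C := by
  ext y
  constructor
  · intro hy
    rw [LinearMap.BilinForm.mem_orthogonal_iff]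
    intro x hx
    have := hy x hx
    rw [stdForm_apply, ← this]
    exact Finset.sum_congr rfl fun i _ => mul_comm _ _
  · intro hy x hx
    have := (LinearMap.BilinForm.mem_orthogonal_iff.1 hy) x hx
    rw [stdForm_apply] at this
    rw [← this]
    exact Finset.sum_congr rfl fun i _ => mul_comm _ _

lemma aux_selfdual {F : Type*} [Field F] (n : ℕ) (ι : Type) [Fintype ι] [DecidableEq ι]
    (A : Matrix ι ι F) (hA : A * A.transpose = -1)
    (hcard : n = Fintype.card ι + Fintype.card ι) :
    ∃ E : Submodule F (Fin n → F), E = dualCode E := by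
  classical
  let e : Fin n ≃ ι ⊕ ι := Fintype.equivOfCardEq (by simp [hcard])
  let w : ι → (ι ⊕ ι → F) := fun j => Sum.elim (Pi.single j 1) (A j)
  let v : ι → (Fin n → F) := fun j => w j ∘ e
  have hpair : ∀ j k, ∑ i, v j i * v k i = 0 := by
    intro j k
    have h0 : ∑ i, v j i * v k i = ∑ i : ι ⊕ ι, w j i * w k i :=
      Fintype.sum_equiv e _ _ (fun i => rfl)
    rw [h0, Fintype.sum_sum_type]
    have h1 : ∑ i : ι, w j (Sum.inl i) * w k (Sum.inl i) = if j = k then 1 else 0 := by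
      simp [w, Pi.single_apply, eq_comm]
    have hA' := congrArg (fun M => M j k) hA
    have h2 : ∑ i : ι, w j (Sum.inr i) * w k (Sum.inr i) = -(if j = k then 1 else 0) := by
      simpa [w, Matrix.mul_apply, Matrix.transpose_apply, Matrix.neg_apply,
        Matrix.one_apply] using hA'
    rw [h1, h2, add_neg_cancel]
  set E : Submodule F (Fin n → F) := Submodule.span F (Set.range v) with hE
  have h_le : E ≤ dualCode E := by
    rw [hE, Submodule.span_le]
    rintro _ ⟨j, rfl⟩
    intro x hx
    induction hx using Submodule.span_induction with
    | mem x hx =>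
      obtain ⟨k, rfl⟩ := hx
      exact hpair j k
    | zero => simp
    | add a b _ _ ha hb =>
      simp only [Pi.add_apply, mul_add, Finset.sum_add_distrib, ha, hb, add_zero]
    | smul c a _ ha =>
      simp only [Pi.smul_apply, smul_eq_mul, mul_left_comm, ← Finset.mul_sum, ha, mul_zero]
  have hw : LinearIndependent F w := by
    apply LinearIndependent.of_comp (LinearMap.funLeft F F (Sum.inl : ι → ι ⊕ ι))
    have : (⇑(LinearMap.funLeft F F (Sum.inl : ι → ι ⊕ ι)) ∘ w)
        = fun j => Pi.single j (1 : F) := by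
      funext j
      rfl
    rw [this]
    have h := (Pi.basisFun F ι).linearIndependent
    rwa [show ⇑(Pi.basisFun F ι) = fun j => Pi.single j (1 : F) from
      funext fun j => Pi.basisFun_apply F ι j] at h
  have hv : LinearIndependent F v := by
    apply LinearIndependent.of_comp (LinearMap.funLeft F F e.symm)
    have : (⇑(LinearMap.funLeft F F (e.symm : ι ⊕ ι → Fin n)) ∘ v) = w := by
      funext j
      funext i
      simp [v, LinearMap.funLeft_apply, Function.comp]
    rw [this]
    exact hw
  have hdimE : Module.finrank F E = Fintype.card ι := finrank_span_eq_card hv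
  have hdimD : Module.finrank F (dualCode E) = Fintype.card ι := by
    rw [dualCode_eq_orthogonal,
      LinearMap.BilinForm.finrank_orthogonal stdForm_nondegenerate, hdimE,
      Module.finrank_pi]
    simp [hcard]
  exact ⟨E, Submodule.eq_of_le_of_finrank_le h_le (by rw [hdimE, hdimD])⟩

theorem exists_selfDual_code
    (q : ℕ) (hq : IsPrimePow q)
    (F : Type*) [Field F] [Fintype F] (hcard : Fintype.card F = q)
    (n : ℕ) (hn : 0 < n)
    (hcond : (Even q ∨ q % 4 = 1) → 2 ∣ n) (hcond' : q % 4 = 3 → 4 ∣ n) :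
    ∃ E : Submodule F (Fin n → F), E = dualCode E := by
  classical
  by_cases h3 : q % 4 = 3
  · -- q ≡ 3 mod 4 : use 2×2 blocks with a² + b² = -1
    obtain ⟨k, hk⟩ := hcond' h3
    have hp : (ringChar F).Prime := CharP.char_is_prime F (ringChar F)
    haveI : NeZero (ringChar F) := ⟨hp.ne_zero⟩
    obtain ⟨a, b, hab⟩ := CharP.sq_add_sq F (ringChar F) (-1)
    have hab' : (a : F) ^ 2 + (b : F) ^ 2 = -1 := by push_cast at hab; exact hab
    set a' : F := (a : F)
    set b' : F := (b : F)
    let A : Matrix (Fin k ⊕ Fin k) (Fin k ⊕ Fin k) F :=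
      Matrix.fromBlocks (a' • 1) (b' • 1) (-b' • 1) (a' • 1)
    have hA : A * A.transpose = -1 := by
      have : A.transpose = Matrix.fromBlocks (a' • 1) (-b' • 1) (b' • 1) (a' • 1) := by
        simp [A, Matrix.fromBlocks_transpose, Matrix.transpose_smul]
      rw [this]
      simp only [A, Matrix.fromBlocks_multiply, Matrix.smul_mul, Matrix.mul_smul, smul_smul,
        Matrix.one_mul, ← add_smul]
      have h1 : a' * a' + b' * b' = -1 := by rw [← hab']; ring
      have h2 : a' * -b' + b' * a' = 0 := by ring
      have h3' : -b' * a' + a' * b' = 0 := by ring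
      have h4 : -b' * -b' + a' * a' = -1 := by rw [← hab']; ring
      rw [h1, h2, h3', h4]
      ext i j
      cases i <;> cases j <;>
        simp [Matrix.fromBlocks, Matrix.neg_apply, Matrix.one_apply, Matrix.smul_apply,
          smul_eq_mul]
    exact aux_selfdual n (Fin k ⊕ Fin k) A hA (by simp [Fintype.card_sum]; omega)
  · -- q % 4 ≠ 3 : -1 is a square
    have hsq : IsSquare (-1 : F) := by
      rw [FiniteField.isSquare_neg_one_iff, hcard]
      exact h3
    obtain ⟨r, hr⟩ := hsq
    have h2n : 2 ∣ n := by
      apply hcond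
      have hq4 : q % 4 = 0 ∨ q % 4 = 1 ∨ q % 4 = 2 := by omega
      rcases hq4 with h | h | h
      · exact Or.inl (Nat.even_iff.mpr (by omega))
      · exact Or.inr h
      · exact Or.inl (Nat.even_iff.mpr (by omega))
    obtain ⟨m, hm⟩ := h2n
    let A : Matrix (Fin m) (Fin m) F := r • 1
    have hA : A * A.transpose = -1 := by
      simp [A, Matrix.transpose_smul, Matrix.smul_mul, Matrix.mul_smul, smul_smul, ← hr]
    exact aux_selfdual n (Fin m) A hA (by simp; omega)
end

section
/- Let K be a field of characteristic ≠ 2, V a finite-dimensional K-vector space with a non-degenerate symmetric bilinear form s, and W ⊆ V a subspace. Every isometry φ : W → V (an injective linear map with s(φw₁, φw₂) = s(w₁, w₂) for all w₁, w₂ ∈ W) extends to an isometry of V onto itself. -/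
open Module


section Refl
variable {K : Type*} [Field K] {V : Type*} [AddCommGroup V] [Module K V]

/-- The reflection in the hyperplane orthogonal to `v`. -/
noncomputable def wittRefl (s : LinearMap.BilinForm K V) (v : V) : V →ₗ[K] V :=
  LinearMap.id - (s.flip v).smulRight ((2 / s v v) • v)

theorem wittRefl_apply (s : LinearMap.BilinForm K V) (v x : V) :
    wittRefl s v x = x - (2 / s v v * s x v) • v := by
  simp [wittRefl, smul_smul, mul_comm]

theorem wittRefl_wittRefl (s : LinearMap.BilinForm K V) {v : V} (hv : s v v ≠ 0) (x : V) :
    wittRefl s v (wittRefl s v x) = x := by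
  simp only [wittRefl_apply, map_sub, map_smul, LinearMap.sub_apply, LinearMap.smul_apply,
    smul_eq_mul]
  have h2 : 2 / s v v * s v v = 2 := by field_simp
  rw [h2]
  have h3 : v - (2 : K) • v = -v := by rw [two_smul]; abel
  rw [h3, smul_neg]; abel

theorem wittRefl_isometry (s : LinearMap.BilinForm K V) (hsymm : ∀ x y : V, s x y = s y x)
    {v : V} (hv : s v v ≠ 0) (x y : V) :
    s (wittRefl s v x) (wittRefl s v y) = s x y := by
  simp only [wittRefl_apply, map_sub, map_smul, LinearMap.sub_apply, LinearMap.smul_apply,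
    smul_eq_mul]
  rw [hsymm v y]
  field_simp
  ring

/-- The reflection as a linear equivalence. -/
noncomputable def wittReflEquiv (s : LinearMap.BilinForm K V) {v : V} (hv : s v v ≠ 0) :
    V ≃ₗ[K] V :=
  LinearEquiv.ofLinear (wittRefl s v) (wittRefl s v)
    (LinearMap.ext fun x => wittRefl_wittRefl s hv x)
    (LinearMap.ext fun x => wittRefl_wittRefl s hv x)

theorem wittReflEquiv_isometry (s : LinearMap.BilinForm K V)
    (hsymm : ∀ x y : V, s x y = s y x) {v : V} (hv : s v v ≠ 0) (x y : V) :
    s (wittReflEquiv s hv x) (wittReflEquiv s hv y) = s x y :=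
  wittRefl_isometry s hsymm hv x y

theorem wittReflEquiv_apply (s : LinearMap.BilinForm K V) {v : V} (hv : s v v ≠ 0) (x : V) :
    wittReflEquiv s hv x = x - (2 / s v v * s x v) • v := wittRefl_apply s v x

/-- Any two anisotropic vectors of the same "length" are related by an isometry. -/
theorem witt_exists_isometry (s : LinearMap.BilinForm K V)
    (hsymm : ∀ x y : V, s x y = s y x) (hchar : (2 : K) ≠ 0)
    {u u' : V} (hu : s u u ≠ 0) (huu' : s u' u' = s u u) :
    ∃ θ : V ≃ₗ[K] V, (∀ x y : V, s (θ x) (θ y) = s x y) ∧ θ u = u' := by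
  have hsum : s (u - u') (u - u') + s (u + u') (u + u') = 2 * 2 * s u u := by
    simp only [map_sub, map_add, LinearMap.sub_apply, LinearMap.add_apply]
    rw [huu', hsymm u' u]; ring
  by_cases h1 : s (u - u') (u - u') ≠ 0
  · refine ⟨wittReflEquiv s h1, fun x y => wittReflEquiv_isometry s hsymm h1 x y, ?_⟩
    rw [wittReflEquiv_apply]
    have he : s (u - u') (u - u') = 2 * (s u u - s u u') := by
      simp only [map_sub, LinearMap.sub_apply]; rw [huu', hsymm u' u]; ring
    have hc : 2 / s (u - u') (u - u') * s u (u - u') = 1 := by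
      rw [he]
      have h2 : s u u - s u u' ≠ 0 := by
        intro h; apply h1; rw [he, h, mul_zero]
      simp only [map_sub, LinearMap.sub_apply]
      field_simp
    rw [hc, one_smul, sub_sub_cancel]
  · push_neg at h1
    have h2 : s (u + u') (u + u') ≠ 0 := by
      intro h; rw [h1, h, zero_add] at hsum
      rcases mul_eq_zero.mp hsum.symm with h | h
      · rcases mul_eq_zero.mp h with h | h <;> exact hchar h
      · exact hu h
    have hu' : s u' u' ≠ 0 := huu' ▸ hu
    refine ⟨(wittReflEquiv s h2).trans (wittReflEquiv s hu'),
      fun x y => by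
        rw [LinearEquiv.trans_apply, LinearEquiv.trans_apply,
          wittReflEquiv_isometry s hsymm hu', wittReflEquiv_isometry s hsymm h2], ?_⟩
    rw [LinearEquiv.trans_apply]
    have he : s (u + u') (u + u') = 2 * (s u u + s u u') := by
      simp only [map_add, LinearMap.add_apply]; rw [huu', hsymm u' u]; ring
    have step1 : wittReflEquiv s h2 u = -u' := by
      rw [wittReflEquiv_apply]
      have hc : 2 / s (u + u') (u + u') * s u (u + u') = 1 := by
        rw [he]
        have h3 : s u u + s u u' ≠ 0 := by
          intro h; apply h2; rw [he, h, mul_zero]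
        simp only [map_add, LinearMap.add_apply]
        field_simp
      rw [hc, one_smul]; abel
    rw [step1, wittReflEquiv_apply]
    have : s (-u') u' = -s u' u' := by simp
    rw [this]
    have hc : 2 / s u' u' * -s u' u' = -2 := by field_simp
    rw [hc, neg_smul, sub_neg_eq_add, two_smul]
    abel

end Refl


section Glue
variable {K : Type*} [Field K] {V : Type*} [AddCommGroup V] [Module K V]

/-- Glue the identity on `p` with an isometry of `q` along a direct sum decomposition
into mutually orthogonal subspaces. -/
theorem witt_glue (s : LinearMap.BilinForm K V) (hsymm : ∀ x y : V, s x y = s y x)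
    (p q : Submodule K V) (hpq : IsCompl p q)
    (horth : ∀ (a : p) (b : q), s (a : V) (b : V) = 0)
    (e : q ≃ₗ[K] q) (he : ∀ b₁ b₂ : q, s ((e b₁ : q) : V) ((e b₂ : q) : V) = s (b₁ : V) (b₂ : V)) :
    ∃ ψ : V ≃ₗ[K] V, (∀ x y : V, s (ψ x) (ψ y) = s x y) ∧
      (∀ a : p, ψ (a : V) = a) ∧ (∀ b : q, ψ (b : V) = (e b : V)) := by
  set P := Submodule.prodEquivOfIsCompl p q hpq with hP
  set ψ := (P.symm.trans ((LinearEquiv.refl K p).prodCongr e)).trans P with hψ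
  have key : ∀ (a : p) (b : q), ψ ((a : V) + (b : V)) = (a : V) + ((e b : q) : V) := by
    intro a b
    have h1 : P.symm ((a : V) + (b : V)) = (a, b) := by
      rw [LinearEquiv.symm_apply_eq, hP, Submodule.coe_prodEquivOfIsCompl']
    rw [hψ]
    simp only [LinearEquiv.trans_apply, h1, LinearEquiv.prodCongr_apply, LinearEquiv.refl_apply]
    rw [hP, Submodule.coe_prodEquivOfIsCompl']
  have decomp : ∀ x : V, x = ((P.symm x).1 : V) + ((P.symm x).2 : V) := by
    intro x
    conv_lhs => rw [← P.apply_symm_apply x]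
    rw [hP, Submodule.coe_prodEquivOfIsCompl']
  refine ⟨ψ, ?_, ?_, ?_⟩
  · intro x y
    obtain ⟨a₁, b₁, hx⟩ : ∃ (a : p) (b : q), x = (a : V) + (b : V) :=
      ⟨(P.symm x).1, (P.symm x).2, decomp x⟩
    obtain ⟨a₂, b₂, hy⟩ : ∃ (a : p) (b : q), y = (a : V) + (b : V) :=
      ⟨(P.symm y).1, (P.symm y).2, decomp y⟩
    rw [hx, hy, key, key]
    simp only [map_add, LinearMap.add_apply]
    have h3 : s ((e b₁ : q) : V) (a₂ : V) = 0 := by rw [hsymm]; exact horth a₂ (e b₁)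
    have h4 : s ((b₁ : q) : V) (a₂ : V) = 0 := by rw [hsymm]; exact horth a₂ b₁
    rw [he b₁ b₂, h3, h4, horth a₁ (e b₂), horth a₁ b₂]
  · intro a
    have := key a 0
    simpa using this
  · intro b
    have := key 0 b
    simpa using this
end Glue

universe v

theorem witt_aux (K : Type*) [Field K] (hchar : (2 : K) ≠ 0) (n : ℕ) :
    ∀ (V : Type v) [AddCommGroup V] [Module K V] [FiniteDimensional K V]
      (s : LinearMap.BilinForm K V)
      (hsymm : ∀ x y : V, s x y = s y x) (hnd : s.Nondegenerate)
      (W : Submodule K V) (φ : W →ₗ[K] V) (_ : Function.Injective φ)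
      (_ : ∀ w₁ w₂ : W, s (φ w₁) (φ w₂) = s (w₁ : V) (w₂ : V)),
      2 * finrank K V - finrank K W ≤ n →
      ∃ ψ : V ≃ₗ[K] V, (∀ v₁ v₂ : V, s (ψ v₁) (ψ v₂) = s v₁ v₂) ∧
        ∀ w : W, ψ (w : V) = φ w := by
  induction n using Nat.strong_induction_on with
  | _ n IH =>
  intro V _ _ _ s hsymm hnd W φ hinj hiso hm
  have hrefl : s.IsRefl := fun x y h => by rw [hsymm]; exact h
  by_cases hbot : W = ⊥
  · refine ⟨LinearEquiv.refl K V, by simp, ?_⟩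
    intro w
    have hw0 : w = 0 := Subtype.ext ((Submodule.eq_bot_iff W).mp hbot _ w.2)
    rw [hw0]; simp
  by_cases han : ∃ w : W, s (w : V) (w : V) ≠ 0
  · -- Case 1 : W contains an anisotropic vector
    obtain ⟨w₀, hw₀⟩ := han
    set u : V := (w₀ : V) with hu_def
    have hu0 : u ≠ 0 := fun h => hw₀ (by rw [h]; simp)
    obtain ⟨θ, θiso, θu⟩ := witt_exists_isometry s hsymm hchar hw₀ (hiso w₀ w₀)
    have θsymm_iso : ∀ x y : V, s (θ.symm x) (θ.symm y) = s x y := by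
      intro x y
      rw [← θiso (θ.symm x) (θ.symm y), θ.apply_symm_apply, θ.apply_symm_apply]
    set φ' : W →ₗ[K] V := θ.symm.toLinearMap ∘ₗ φ with hφ'def
    have φ'app : ∀ w : W, φ' w = θ.symm (φ w) := fun w => rfl
    have φ'iso : ∀ w₁ w₂ : W, s (φ' w₁) (φ' w₂) = s (w₁ : V) (w₂ : V) := fun a b => by
      rw [φ'app, φ'app, θsymm_iso, hiso]
    have φ'inj : Function.Injective φ' := fun a b hab => by
      rw [φ'app, φ'app] at hab
      exact hinj (θ.symm.injective hab)
    have φ'w₀ : φ' w₀ = u := by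
      rw [φ'app, ← θu, θ.symm_apply_apply]
    set H := s.orthogonal (K ∙ u) with hHdef
    have memH_iff : ∀ y : V, y ∈ H ↔ s u y = 0 := by
      intro y
      rw [hHdef, LinearMap.BilinForm.mem_orthogonal_iff]
      constructor
      · intro h; exact h u (Submodule.mem_span_singleton_self u)
      · intro h m hm
        obtain ⟨t, rfl⟩ := Submodule.mem_span_singleton.mp hm
        show s (t • u) y = 0
        rw [map_smul, LinearMap.smul_apply, smul_eq_mul, h, mul_zero]
    have s'nd : (s.restrict H).Nondegenerate :=
      LinearMap.BilinForm.restrict_nondegenerate_orthogonal_spanSingleton s hnd hrefl hw₀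
    have s'symm : ∀ x y : H, s.restrict H x y = s.restrict H y x := fun x y =>
      hsymm (x : V) (y : V)
    set W'' := Submodule.comap H.subtype W with hW''def
    set ι : W'' →ₗ[K] W := H.subtype.restrict (fun x hx => hx) with hιdef
    have ιcoe : ∀ x : W'', ((ι x : W) : V) = ((x : H) : V) := fun x => rfl
    have hφ'H : ∀ x : W'', (φ'.comp ι) x ∈ H := by
      intro x
      rw [memH_iff]
      have h1 : s u ((x : H) : V) = 0 := (memH_iff _).mp (x : H).2
      calc s u (φ' (ι x)) = s (φ' w₀) (φ' (ι x)) := by rw [φ'w₀]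
        _ = s (w₀ : V) ((ι x : W) : V) := φ'iso w₀ (ι x)
        _ = 0 := by rw [ιcoe, ← hu_def]; exact h1
    set φ'' : W'' →ₗ[K] H := LinearMap.codRestrict H (φ'.comp ι) hφ'H with hφ''def
    have φ''coe : ∀ x : W'', ((φ'' x : H) : V) = φ' (ι x) := fun x => rfl
    have ιinj : Function.Injective ι := fun a b hab => by
      have : ((a : H) : V) = ((b : H) : V) := by rw [← ιcoe a, ← ιcoe b, hab]
      exact Subtype.ext (Subtype.ext this)
    have φ''inj : Function.Injective φ'' := fun a b hab =>
      ιinj (φ'inj (congrArg Subtype.val hab))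
    have φ''iso : ∀ a b : W'', s.restrict H (φ'' a) (φ'' b)
        = s.restrict H (a : H) (b : H) := by
      intro a b
      show s (φ' (ι a)) (φ' (ι b)) = s ((a : H) : V) ((b : H) : V)
      rw [φ'iso, ιcoe, ιcoe]
    -- dimension bookkeeping
    have hdim1 : finrank K (K ∙ u) = 1 := finrank_span_singleton hu0
    have hdimH : finrank K H = finrank K V - 1 := by
      rw [hHdef, LinearMap.BilinForm.finrank_orthogonal hnd, hdim1]
    have hVpos : 1 ≤ finrank K V := hdim1 ▸ Submodule.finrank_le (K ∙ u)
    have hW''eq : finrank K W'' = finrank K ↥(H ⊓ W) := by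
      rw [← Submodule.finrank_map_subtype_eq H W'', hW''def, Submodule.map_comap_subtype]
    have hsupinf : finrank K ↥(H ⊔ W) + finrank K ↥(H ⊓ W) = finrank K H + finrank K W :=
      Submodule.finrank_sup_add_finrank_inf_eq H W
    have hsup_le : finrank K ↥(H ⊔ W) ≤ finrank K V := Submodule.finrank_le _
    have hWle : finrank K W ≤ finrank K V := Submodule.finrank_le _
    have hW''le : finrank K W'' ≤ finrank K H := Submodule.finrank_le _
    have hWpos : finrank K W ≠ 0 := by
      intro h0
      exact hbot (Submodule.finrank_eq_zero.mp h0)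
    obtain ⟨ψ'', ψ''iso, ψ''ext⟩ := IH (2 * finrank K H - finrank K W'') (by omega)
      H (s.restrict H) s'symm s'nd W'' φ'' φ''inj φ''iso (le_refl _)
    -- glue with the identity on K ∙ u
    have hpq : IsCompl (K ∙ u) H :=
      LinearMap.BilinForm.isCompl_span_singleton_orthogonal hw₀
    have horth : ∀ (a : ↥(K ∙ u)) (b : ↥H), s (a : V) (b : V) = 0 := by
      intro a b
      obtain ⟨t, ht⟩ := Submodule.mem_span_singleton.mp a.2
      rw [← ht, map_smul, LinearMap.smul_apply, smul_eq_mul,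
        (memH_iff _).mp b.2, mul_zero]
    have he : ∀ b₁ b₂ : H, s ((ψ'' b₁ : H) : V) ((ψ'' b₂ : H) : V) = s (b₁ : V) (b₂ : V) := by
      intro b₁ b₂
      exact ψ''iso b₁ b₂
    obtain ⟨ψ₁, ψ₁iso, ψ₁p, ψ₁q⟩ := witt_glue s hsymm (K ∙ u) H hpq horth ψ'' he
    have ψ₁u : ψ₁ u = u := ψ₁p ⟨u, Submodule.mem_span_singleton_self u⟩
    have ψ₁ext : ∀ w : W, ψ₁ (w : V) = φ' w := by
      intro w
      set c := s u (w : V) / s u u with hcdef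
      have hmemH : ((w : V) - c • u) ∈ H := by
        rw [memH_iff, map_sub, map_smul, smul_eq_mul, hcdef]
        field_simp
        ring
      have hmemW : ((w : V) - c • u) ∈ W := sub_mem w.2 (Submodule.smul_mem _ c w₀.2)
      have hmemW'' : (⟨(w : V) - c • u, hmemH⟩ : H) ∈ W'' := hmemW
      have e1 : ψ₁ (w : V) = c • ψ₁ u + ψ₁ ((w : V) - c • u) := by
        rw [← map_smul, ← map_add]
        congr 1
        abel
      have e3 : ψ₁ ((w : V) - c • u) = ((ψ'' ⟨(w : V) - c • u, hmemH⟩ : H) : V) :=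
        ψ₁q ⟨(w : V) - c • u, hmemH⟩
      have e4 : ψ'' ⟨(w : V) - c • u, hmemH⟩
          = φ'' (⟨⟨(w : V) - c • u, hmemH⟩, hmemW''⟩ : W'') :=
        ψ''ext ⟨⟨(w : V) - c • u, hmemH⟩, hmemW''⟩
      have e5 : ((φ'' (⟨⟨(w : V) - c • u, hmemH⟩, hmemW''⟩ : W'') : H) : V)
          = φ' (⟨(w : V) - c • u, hmemW⟩ : W) := by
        rw [φ''coe]
        congr 1
      have e6 : (⟨(w : V) - c • u, hmemW⟩ : W) = w - c • w₀ := Subtype.ext rfl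
      rw [e1, ψ₁u, e3, e4, e5, e6, map_sub, map_smul, φ'w₀]
      abel
    refine ⟨ψ₁.trans θ, fun x y => by
      rw [LinearEquiv.trans_apply, LinearEquiv.trans_apply, θiso, ψ₁iso], ?_⟩
    intro w
    rw [LinearEquiv.trans_apply, ψ₁ext w, φ'app, θ.apply_symm_apply]
  · -- Case 2 : W is totally isotropic
    push_neg at han
    have htot : ∀ w₁ w₂ : W, s (w₁ : V) (w₂ : V) = 0 := by
      intro w₁ w₂
      have h0 := han (w₁ + w₂)
      rw [Submodule.coe_add] at h0
      simp only [map_add, LinearMap.add_apply] at h0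
      rw [han w₁, han w₂, hsymm (w₂ : V) (w₁ : V)] at h0
      have h1 : 2 * s (w₁ : V) (w₂ : V) = 0 := by linear_combination h0
      rcases mul_eq_zero.mp h1 with h | h
      · exact absurd h hchar
      · exact h
    obtain ⟨u, huW, hu0⟩ := (Submodule.ne_bot_iff W).mp hbot
    set w₀ : W := ⟨u, huW⟩ with hw₀def
    have hw₀0 : w₀ ≠ 0 := fun h => hu0 (congrArg Subtype.val h)
    -- a functional on W with f w₀ = 1
    obtain ⟨f₀, hf₀⟩ : ∃ f : Module.Dual K W, f w₀ ≠ 0 := by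
      by_contra hc
      push_neg at hc
      exact hw₀0 ((Module.forall_dual_apply_eq_zero_iff K w₀).mp hc)
    set f : Module.Dual K W := (f₀ w₀)⁻¹ • f₀ with hfdef
    have hf : f w₀ = 1 := by
      rw [hfdef, LinearMap.smul_apply, smul_eq_mul, inv_mul_cancel₀ hf₀]
    -- x₀ realizing f on W via s
    set sD := s.toDual hnd with hsD
    set x₀ : V := sD.symm (Subspace.dualLift W f) with hx₀def
    have hx₀ : ∀ w : W, s x₀ (w : V) = f w := by
      intro w
      rw [hx₀def, hsD, LinearMap.BilinForm.apply_toDual_symm_apply,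
        Subspace.dualLift_of_subtype]
    -- x'₀ realizing f ∘ φ⁻¹ on range φ via s
    set W' := LinearMap.range φ with hW'def
    set φe := LinearEquiv.ofInjective φ hinj with hφedef
    set f' : Module.Dual K W' := f ∘ₗ (φe.symm : W' →ₗ[K] W) with hf'def
    set x'₀ : V := sD.symm (Subspace.dualLift W' f') with hx'₀def
    have hx'₀ : ∀ w : W, s x'₀ (φ w) = f w := by
      intro w
      have hmem : φ w ∈ W' := LinearMap.mem_range_self φ w
      rw [hx'₀def, hsD, LinearMap.BilinForm.apply_toDual_symm_apply,
        Subspace.dualLift_of_mem hmem, hf'def]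
      show f (φe.symm ⟨φ w, hmem⟩) = f w
      have he : φe w = ⟨φ w, hmem⟩ := Subtype.ext (LinearEquiv.ofInjective_apply φ w)
      rw [← he, LinearEquiv.symm_apply_apply]
    -- adjust to make them isotropic
    set x : V := x₀ - (s x₀ x₀ / 2) • u with hxdef
    set x' : V := x'₀ - (s x'₀ x'₀ / 2) • (φ w₀) with hx'def
    have hsu : ∀ w : W, s u (w : V) = 0 := fun w => htot w₀ w
    have hx : ∀ w : W, s x (w : V) = f w := by
      intro w
      rw [hxdef]
      simp only [map_sub, map_smul, LinearMap.sub_apply, LinearMap.smul_apply, smul_eq_mul]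
      rw [hx₀ w, hsu w, mul_zero, sub_zero]
    have hx₀u : s x₀ u = 1 := by have := hx₀ w₀; rwa [hf] at this
    have hxx : s x x = 0 := by
      rw [hxdef]
      simp only [map_sub, map_smul, LinearMap.sub_apply, LinearMap.smul_apply, smul_eq_mul]
      have h2 : s u x₀ = 1 := by rw [hsymm]; exact hx₀u
      have h3 : s u u = 0 := htot w₀ w₀
      rw [hx₀u, h2, h3]
      field_simp
      ring
    have hφw₀ : ∀ w : W, s (φ w₀) (φ w) = 0 := by
      intro w; rw [hiso]; exact htot w₀ w
    have hx' : ∀ w : W, s x' (φ w) = f w := by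
      intro w
      rw [hx'def]
      simp only [map_sub, map_smul, LinearMap.sub_apply, LinearMap.smul_apply, smul_eq_mul]
      rw [hx'₀ w, hφw₀ w, mul_zero, sub_zero]
    have hx'₀u : s x'₀ (φ w₀) = 1 := by have := hx'₀ w₀; rwa [hf] at this
    have hx'x' : s x' x' = 0 := by
      rw [hx'def]
      simp only [map_sub, map_smul, LinearMap.sub_apply, LinearMap.smul_apply, smul_eq_mul]
      have h2 : s (φ w₀) x'₀ = 1 := by rw [hsymm]; exact hx'₀u
      have h3 : s (φ w₀) (φ w₀) = 0 := hφw₀ w₀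
      rw [hx'₀u, h2, h3]
      field_simp
      ring
    -- the enlarged isometry
    set g : (W × K) →ₗ[K] V := W.subtype.comp (LinearMap.fst K W K)
      + (LinearMap.snd K W K).smulRight x with hgdef
    set h : (W × K) →ₗ[K] V := φ.comp (LinearMap.fst K W K)
      + (LinearMap.snd K W K).smulRight x' with hhdef
    have gapp : ∀ p : W × K, g p = (p.1 : V) + p.2 • x := fun p => rfl
    have happ : ∀ p : W × K, h p = φ p.1 + p.2 • x' := fun p => rfl
    have hxu : s x u = 1 := by have := hx w₀; rwa [hf] at this
    have hx'u : s x' (φ w₀) = 1 := by have := hx' w₀; rwa [hf] at this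
    have gker : ∀ p : W × K, g p = 0 → p = 0 := by
      rintro ⟨w, a⟩ hp
      rw [gapp] at hp
      have h1 : s ((w : V) + a • x) u = 0 := by rw [hp]; simp
      rw [map_add, LinearMap.add_apply, map_smul, LinearMap.smul_apply, smul_eq_mul] at h1
      rw [show s (w : V) u = 0 from htot w w₀, hxu, mul_one, zero_add] at h1
      have hw : w = 0 := by
        rw [h1, zero_smul, add_zero] at hp
        exact Subtype.ext hp
      show (w, a) = (0, 0)
      rw [hw, h1]
    have hker : ∀ p : W × K, h p = 0 → p = 0 := by
      rintro ⟨w, a⟩ hp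
      rw [happ] at hp
      have h1 : s (φ w + a • x') (φ w₀) = 0 := by rw [hp]; simp
      rw [map_add, LinearMap.add_apply, map_smul, LinearMap.smul_apply, smul_eq_mul] at h1
      rw [show s (φ w) (φ w₀) = 0 from by rw [hiso]; exact htot w w₀,
        hx'u, mul_one, zero_add] at h1
      have hw : w = 0 := by
        rw [h1, zero_smul, add_zero] at hp
        exact hinj (by rw [hp, map_zero])
      show (w, a) = (0, 0)
      rw [hw, h1]
    have ginj : Function.Injective g := by
      intro p q hpq
      have : g (p - q) = 0 := by rw [map_sub, hpq, sub_self]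
      exact sub_eq_zero.mp (gker _ this)
    have hinjh : Function.Injective h := by
      intro p q hpq
      have : h (p - q) = 0 := by rw [map_sub, hpq, sub_self]
      exact sub_eq_zero.mp (hker _ this)
    set W₁ := LinearMap.range g with hW₁def
    set ge := LinearEquiv.ofInjective g ginj with hgedef
    set φ₁ : W₁ →ₗ[K] V := h.comp (ge.symm : W₁ →ₗ[K] (W × K)) with hφ₁def
    have φ₁app : ∀ p : W × K, φ₁ (ge p) = h p := fun p => by
      show h (ge.symm (ge p)) = h p
      rw [LinearEquiv.symm_apply_apply]
    have gecoe : ∀ p : W × K, ((ge p : W₁) : V) = g p := fun p =>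
      LinearEquiv.ofInjective_apply g p
    have φ₁inj : Function.Injective φ₁ := fun a b hab =>
      ge.symm.injective (hinjh hab)
    have φ₁iso : ∀ z₁ z₂ : W₁, s (φ₁ z₁) (φ₁ z₂) = s (z₁ : V) (z₂ : V) := by
      intro z₁ z₂
      obtain ⟨p₁, rfl⟩ : ∃ p, ge p = z₁ := ⟨ge.symm z₁, ge.apply_symm_apply z₁⟩
      obtain ⟨p₂, rfl⟩ : ∃ p, ge p = z₂ := ⟨ge.symm z₂, ge.apply_symm_apply z₂⟩
      rw [φ₁app, φ₁app, gecoe, gecoe]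
      obtain ⟨w₁, a⟩ := p₁; obtain ⟨w₂, b⟩ := p₂
      rw [happ, happ, gapp, gapp]
      simp only [map_add, map_smul, LinearMap.add_apply, LinearMap.smul_apply, smul_eq_mul]
      have c1 : s (φ w₁) x' = f w₁ := by rw [hsymm]; exact hx' w₁
      have c2 : s (w₁ : V) x = f w₁ := by rw [hsymm]; exact hx w₁
      rw [hiso w₁ w₂, c1, c2, hx' w₂, hx w₂, hx'x', hxx]
    have hdimW₁ : finrank K W₁ = finrank K W + 1 := by
      rw [hW₁def, LinearMap.finrank_range_of_inj ginj, Module.finrank_prod, finrank_self]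
    have hW₁le : finrank K W₁ ≤ finrank K V := Submodule.finrank_le _
    obtain ⟨ψ, ψiso, ψext⟩ := IH (2 * finrank K V - finrank K W₁) (by omega) V s hsymm hnd
      W₁ φ₁ φ₁inj φ₁iso (le_refl _)
    refine ⟨ψ, ψiso, ?_⟩
    intro w
    have hgw : g (w, 0) = (w : V) := by rw [gapp]; simp
    have hext := ψext (ge (w, 0))
    rw [φ₁app, gecoe, hgw, happ] at hext
    rw [hext]
    simp


/-- Witt's extension theorem. -/
theorem witt_extension
    (K : Type*) [Field K] (hchar : (2 : K) ≠ 0)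
    (V : Type*) [AddCommGroup V] [Module K V] [FiniteDimensional K V]
    (s : LinearMap.BilinForm K V)
    (hsymm : ∀ x y : V, s x y = s y x)
    (hnd : ∀ x : V, (∀ y : V, s x y = 0) → x = 0)
    (W : Submodule K V) (φ : W →ₗ[K] V) (hinj : Function.Injective φ)
    (hiso : ∀ w₁ w₂ : W, s (φ w₁) (φ w₂) = s (w₁ : V) (w₂ : V)) :
    ∃ ψ : V ≃ₗ[K] V, (∀ v₁ v₂ : V, s (ψ v₁) (ψ v₂) = s v₁ v₂) ∧
      ∀ w : W, ψ (w : V) = φ w :=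
  witt_aux K hchar (2 * Module.finrank K V - Module.finrank K W) V s hsymm
    ((LinearMap.IsRefl.nondegenerate_iff_separatingLeft (fun x y h => by rw [hsymm]; exact h)).mpr hnd)
    W φ hinj hiso
    (le_refl _)
end

section
/- Let q ≥ 64 be a nonprime prime power with q ≠ 125, write q = ℓ^r with ℓ a prime power and r > 1, choosing the representation so that δ₁ := 1/2 - (1/2)(1/(ℓ^⌈r/2⌉ - 1) + 1/(ℓ^⌊r/2⌋ - 1)) is maximal. Then 1 - H_q(δ₁) < 1/2, where H_q is the q-ary entropy function. Equivalently, if δ₀ is defined by 1 - H_q(δ₀) = 1/2, then δ₀ < δ₁. -/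
/-- The `q`-ary entropy function. -/
noncomputable def qaryEntropy (q : ℕ) (δ : ℝ) : ℝ :=
  δ * Real.logb q (q - 1) - δ * Real.logb q δ - (1 - δ) * Real.logb q (1 - δ)

namespace TvzGv

lemma log_affine_le {c x : ℝ} (hc : 0 < c) (hx : 0 < x) :
    Real.log x ≤ Real.log c + x / c - 1 := by
  have h := Real.log_le_sub_one_of_pos (show 0 < x / c by positivity)
  rw [Real.log_div (ne_of_gt hx) (ne_of_gt hc)] at h
  linarith

lemma log8 : Real.log 8 = 3 * Real.log 2 := by
  rw [show (8:ℝ) = 2^3 by norm_num, Real.log_pow]; push_cast; ring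

lemma caseEven {b : ℝ} (hb : 8 ≤ b) :
    (1/2) * (1/(b-1) + 1/(b-1)) ≤ 1/7 ∧
    (1/2) * (1/(b-1) + 1/(b-1)) * (2 * Real.log b) ≤ 3/5 := by
  have hb1 : (0:ℝ) < b - 1 := by linarith
  have hlb : Real.log b ≤ Real.log 8 + b / 8 - 1 := log_affine_le (by norm_num) (by linarith)
  have h2 : Real.log 2 < 0.6931471808 := Real.log_two_lt_d9
  have h2' : (0:ℝ) < Real.log 2 := Real.log_pos (by norm_num)
  have hE : (1/2) * (1/(b-1) + 1/(b-1)) = 1/(b-1) := by ring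
  rw [hE]
  constructor
  · rw [div_le_div_iff₀ hb1 (by norm_num)]; linarith
  · rw [div_mul_eq_mul_div, div_le_iff₀ hb1]
    nlinarith [log8]

lemma case2a {b : ℝ} (hb : 8 ≤ b) :
    (1/2) * (1/(2*b-1) + 1/(b-1)) ≤ 1/7 ∧
    (1/2) * (1/(2*b-1) + 1/(b-1)) * (Real.log 2 + 2 * Real.log b) ≤ 3/5 := by
  have hb1 : (0:ℝ) < b - 1 := by linarith
  have hb2 : (0:ℝ) < 2*b - 1 := by linarith
  have hlb : Real.log b ≤ Real.log 8 + b / 8 - 1 := log_affine_le (by norm_num) (by linarith)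
  have h2 : Real.log 2 < 0.6931471808 := Real.log_two_lt_d9
  have h2' : (0:ℝ) < Real.log 2 := Real.log_pos (by norm_num)
  have hlbpos : (0:ℝ) < Real.log b := Real.log_pos (by linarith)
  have hE : (1/2) * (1/(2*b-1) + 1/(b-1)) ≤ (3/4) / (b-1) := by
    have h1 : 1/(2*b-1) ≤ 1/(2*(b-1)) :=
      one_div_le_one_div_of_le (by linarith) (by linarith)
    have h2a : 1/(2*(b-1)) = (1/2) * (1/(b-1)) := by field_simp
    have h3 : (3/4)/(b-1) = (3/4) * (1/(b-1)) := by field_simp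
    rw [h3]
    nlinarith [one_div_pos.mpr hb1]
  constructor
  · have : (3/4)/(b-1) ≤ 1/7 := by
      rw [div_le_div_iff₀ hb1 (by norm_num)]; linarith
    linarith
  · have hL : Real.log 2 + 2 * Real.log b ≤ 7 * Real.log 2 + b/4 - 2 := by
      nlinarith [log8]
    calc (1/2) * (1/(2*b-1) + 1/(b-1)) * (Real.log 2 + 2 * Real.log b)
        ≤ ((3/4)/(b-1)) * (7 * Real.log 2 + b/4 - 2) := by
          apply mul_le_mul hE hL (by positivity) (by positivity)
      _ ≤ 3/5 := by
          rw [div_mul_eq_mul_div, div_le_iff₀ hb1]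
          nlinarith

lemma case2b {p b : ℝ} (hp : 3 ≤ p) (hpb : p ≤ b) (hb : 9 ≤ b) :
    (1/2) * (1/(p*b-1) + 1/(b-1)) ≤ 1/7 ∧
    (1/2) * (1/(p*b-1) + 1/(b-1)) * (Real.log p + 2 * Real.log b) ≤ 3/5 := by
  have hb1 : (0:ℝ) < b - 1 := by linarith
  have hpb1 : (0:ℝ) < p*b - 1 := by nlinarith
  have hlb : Real.log b ≤ Real.log 9 + b / 9 - 1 := log_affine_le (by norm_num) (by linarith)
  have h9 : Real.log 9 ≤ 3 * Real.log 2 + 1/8 := by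
    have h98 : Real.log 9 ≤ Real.log 8 + 9/8 - 1 := log_affine_le (by norm_num) (by norm_num)
    linarith [log8]
  have h2 : Real.log 2 < 0.6931471808 := Real.log_two_lt_d9
  have hlppos : (0:ℝ) < Real.log p := Real.log_pos (by linarith)
  have hlbpos : (0:ℝ) < Real.log b := Real.log_pos (by linarith)
  have hlplb : Real.log p ≤ Real.log b := Real.log_le_log (by linarith) hpb
  have hE : (1/2) * (1/(p*b-1) + 1/(b-1)) ≤ (2/3) / (b-1) := by
    have h3 : 3*(b-1) ≤ p*b - 1 := by nlinarith
    have hthis : 1/(p*b-1) ≤ 1/(3*(b-1)) :=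
      one_div_le_one_div_of_le (by linarith) h3
    have h33 : 1/(3*(b-1)) = (1/3) * (1/(b-1)) := by field_simp
    rw [h33] at hthis
    have expand : (2/3)/(b-1) = (1/2) * ((1/3)*(1/(b-1)) + 1/(b-1)) := by field_simp; ring
    rw [expand]
    nlinarith [one_div_pos.mpr hb1]
  constructor
  · have : (2/3)/(b-1) ≤ 1/7 := by
      rw [div_le_div_iff₀ hb1 (by norm_num)]; linarith
    linarith
  · have hL : Real.log p + 2 * Real.log b ≤ 3 * (3 * Real.log 2 + 1/8 + b/9 - 1) := by
      nlinarith
    calc (1/2) * (1/(p*b-1) + 1/(b-1)) * (Real.log p + 2 * Real.log b)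
        ≤ ((2/3)/(b-1)) * (3 * (3 * Real.log 2 + 1/8 + b/9 - 1)) := by
          apply mul_le_mul hE hL (by positivity) (by positivity)
      _ ≤ 3/5 := by
          rw [div_mul_eq_mul_div, div_le_iff₀ hb1]
          nlinarith

lemma case2c {p : ℝ} (hp : 7 ≤ p) :
    (1/2) * (1/(p^2-1) + 1/(p-1)) ≤ 1/7 ∧
    (1/2) * (1/(p^2-1) + 1/(p-1)) * (3 * Real.log p) ≤ 3/5 := by
  have hp1 : (0:ℝ) < p - 1 := by linarith
  have hp2 : (0:ℝ) < p^2 - 1 := by nlinarith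
  have hlp : Real.log p ≤ Real.log 7 + p/7 - 1 := log_affine_le (by norm_num) (by linarith)
  have h78 : Real.log 7 ≤ Real.log 8 := Real.log_le_log (by norm_num) (by norm_num)
  have h2 : Real.log 2 < 0.6931471808 := Real.log_two_lt_d9
  have hlppos : (0:ℝ) < Real.log p := Real.log_pos (by linarith)
  have hEeq : (1/2) * (1/(p^2-1) + 1/(p-1)) = (p+2)/(2*(p^2-1)) := by
    field_simp
    ring
  constructor
  · rw [hEeq, div_le_div_iff₀ (by positivity) (by norm_num)]
    nlinarith
  · rw [hEeq]
    rw [div_mul_eq_mul_div, div_le_iff₀ (by positivity)]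
    nlinarith [mul_le_mul_of_nonneg_left hlp (show (0:ℝ) ≤ 3*(p+2) by linarith),
      log8]

lemma entropy_gt (q : ℕ) (hq : 64 ≤ q) (ε : ℝ) (hε0 : 0 < ε) (hε7 : ε ≤ 1/7)
    (hεl : ε * Real.log q ≤ 3/5) : 1/2 < _root_.qaryEntropy q (1/2 - ε) := by
  have hQ : (64:ℝ) ≤ (q:ℝ) := by exact_mod_cast hq
  have hL : (0:ℝ) < Real.log q := Real.log_pos (by linarith)
  have hδ0 : (0:ℝ) < 1/2 - ε := by linarith
  have hδ1 : (0:ℝ) < 1/2 + ε := by linarith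
  set L := Real.log q with hLdef
  have hA1 : Real.log ((q:ℝ) - 1) ≤ L := Real.log_le_log (by linarith) (by linarith)
  have hA2 : L - Real.log ((q:ℝ) - 1) ≤ 1/63 := by
    have h := Real.log_le_sub_one_of_pos
      (show (0:ℝ) < (q:ℝ)/((q:ℝ)-1) by apply div_pos <;> linarith)
    rw [Real.log_div (by linarith) (by linarith)] at h
    have hq63 : (q:ℝ)/((q:ℝ)-1) ≤ 64/63 := by
      rw [div_le_div_iff₀ (by linarith) (by norm_num)]; linarith
    linarith
  have hu : Real.log (1 - 2*ε) ≤ -(2*ε) := by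
    have := Real.log_le_sub_one_of_pos (show (0:ℝ) < 1 - 2*ε by linarith)
    linarith
  have hv : Real.log (1 + 2*ε) ≤ 2*ε := by
    have := Real.log_le_sub_one_of_pos (show (0:ℝ) < 1 + 2*ε by linarith)
    linarith
  have hl2 : (0.6931471803 : ℝ) < Real.log 2 := Real.log_two_gt_d9
  have hδval : (1:ℝ)/2 - ε = (1 - 2*ε)/2 := by ring
  have h1δval : 1 - ((1:ℝ)/2 - ε) = (1 + 2*ε)/2 := by ring
  have hlogδ : Real.log (1/2 - ε) = Real.log (1 - 2*ε) - Real.log 2 := by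
    rw [hδval, Real.log_div (by linarith) (by norm_num)]
  have hlog1δ : Real.log (1 - (1/2 - ε)) = Real.log (1 + 2*ε) - Real.log 2 := by
    rw [h1δval, Real.log_div (by linarith) (by norm_num)]
  have hexp : _root_.qaryEntropy q (1/2 - ε) =
      ((1/2 - ε) * Real.log ((q:ℝ) - 1) - (1/2 - ε) * Real.log (1/2 - ε)
        - (1/2 + ε) * Real.log (1 - (1/2 - ε))) / L := by
    unfold _root_.qaryEntropy
    rw [Real.logb, Real.logb, Real.logb]
    ring
  rw [hexp, lt_div_iff₀ hL]
  rw [hlogδ, hlog1δ]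
  have p1 : (1/2 - ε) * Real.log (1 - 2*ε) ≤ (1/2 - ε) * (-(2*ε)) :=
    mul_le_mul_of_nonneg_left hu (by linarith)
  have p2 : (1/2 + ε) * Real.log (1 + 2*ε) ≤ (1/2 + ε) * (2*ε) :=
    mul_le_mul_of_nonneg_left hv (by linarith)
  have p3 : ε * Real.log ((q:ℝ)-1) ≤ ε * L :=
    mul_le_mul_of_nonneg_left hA1 hε0.le
  have p4 : ε * ε ≤ (1/7) * (1/7) := mul_le_mul hε7 hε7 hε0.le (by norm_num)
  nlinarith [p1, p2, p3, p4, hA2, hεl, hl2]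

lemma bridge (q : ℕ) (δ : ℝ) :
    _root_.qaryEntropy q δ = Real.qaryEntropy q δ / Real.log q := by
  unfold _root_.qaryEntropy Real.qaryEntropy Real.binEntropy
  rw [Real.log_inv, Real.log_inv, Real.logb, Real.logb, Real.logb]
  push_cast
  ring

lemma eps_spec (p s : ℕ) (hp : p.Prime) (hs : 2 ≤ s) (h64 : 64 ≤ p^s) (h125 : p^s ≠ 125) :
    0 < (1/2:ℝ) * (1/((p:ℝ)^((s+1)/2 : ℕ) - 1) + 1/((p:ℝ)^(s/2 : ℕ) - 1)) ∧
    (1/2:ℝ) * (1/((p:ℝ)^((s+1)/2 : ℕ) - 1) + 1/((p:ℝ)^(s/2 : ℕ) - 1)) ≤ 1/7 ∧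
    (1/2:ℝ) * (1/((p:ℝ)^((s+1)/2 : ℕ) - 1) + 1/((p:ℝ)^(s/2 : ℕ) - 1))
      * Real.log ((p:ℝ)^s) ≤ 3/5 := by
  have hp2 : 2 ≤ p := hp.two_le
  have hpR : (2:ℝ) ≤ (p:ℝ) := by exact_mod_cast hp2
  have hk1 : 1 ≤ s/2 := by omega
  have hm1 : 1 ≤ (s+1)/2 := by omega
  have hbig : ∀ t : ℕ, 1 ≤ t → (2:ℝ) ≤ (p:ℝ)^t := by
    intro t ht
    calc (2:ℝ) ≤ (p:ℝ) := hpR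
    _ = (p:ℝ)^1 := (pow_one _).symm
    _ ≤ (p:ℝ)^t := pow_le_pow_right₀ (by linarith) ht
  have hposm : (0:ℝ) < (p:ℝ)^((s+1)/2 : ℕ) - 1 := by
    have := hbig _ hm1; linarith
  have hposk : (0:ℝ) < (p:ℝ)^(s/2 : ℕ) - 1 := by
    have := hbig _ hk1; linarith
  refine ⟨by positivity, ?_⟩
  rcases Nat.even_or_odd s with ⟨k, hk⟩ | ⟨k, hk⟩
  · -- even case
    have hkk : s/2 = k := by omega
    have hmm : (s+1)/2 = k := by omega
    have hb8 : (8:ℕ) ≤ p^k := by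
      by_contra h
      push_neg at h
      have h1 : p^s = p^k * p^k := by rw [hk, pow_add]
      have h7 : p^k ≤ 7 := by omega
      have h2 : p^k * p^k ≤ 49 := Nat.mul_le_mul h7 h7
      omega
    have hb8R : (8:ℝ) ≤ (p:ℝ)^k := by exact_mod_cast hb8
    have hE := caseEven hb8R
    rw [hkk, hmm]
    have hlog : Real.log ((p:ℝ)^s) = 2 * Real.log ((p:ℝ)^k) := by
      rw [Real.log_pow, Real.log_pow, hk]; push_cast; ring
    rw [hlog]
    exact hE
  · -- odd case, s = 2k+1
    have hkk : s/2 = k := by omega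
    have hmm : (s+1)/2 = k + 1 := by omega
    have hk1' : 1 ≤ k := by omega
    rw [hkk, hmm]
    have hlog : Real.log ((p:ℝ)^s) = Real.log (p:ℝ) + 2 * Real.log ((p:ℝ)^k) := by
      rw [Real.log_pow, Real.log_pow, hk]; push_cast; ring
    rcases eq_or_lt_of_le hk1' with hk1e | hk2
    · -- k = 1, so s = 3, p ≥ 7
      have hkeq : k = 1 := hk1e.symm
      subst hkeq
      have hs3 : s = 3 := by omega
      rw [hs3] at h64 h125
      have hp7 : 7 ≤ p := by
        have h4 : 4 ≤ p := by
          by_contra h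
          push_neg at h
          have hle : p^3 ≤ 27 := by
            calc p^3 ≤ 3^3 := Nat.pow_le_pow_left (by omega) 3
            _ = 27 := by norm_num
          omega
        have h5 : p ≠ 5 := by
          rintro rfl
          norm_num at h125
        have h6 : p ≠ 6 := by
          rintro rfl
          exact absurd hp (by norm_num)
        have h4' : p ≠ 4 := by
          rintro rfl
          exact absurd hp (by norm_num)
        omega
      have hp7R : (7:ℝ) ≤ (p:ℝ) := by exact_mod_cast hp7
      have hC := case2c hp7R
      have e1 : (p:ℝ)^(1+1 : ℕ) = (p:ℝ)^2 := by norm_num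
      have e2 : (p:ℝ)^(1 : ℕ) = (p:ℝ) := by norm_num
      rw [e1, e2, hlog]
      have hlog2 : Real.log (p:ℝ) + 2 * Real.log ((p:ℝ)^(1:ℕ)) = 3 * Real.log (p:ℝ) := by
        rw [Real.log_pow]; push_cast; ring
      rw [e2] at hlog2 ⊢
      constructor
      · exact hC.1
      · rw [show Real.log (p:ℝ) + 2 * Real.log (p:ℝ) = 3 * Real.log (p:ℝ) by ring]
        exact hC.2
    · -- k ≥ 2
      have hk2' : 2 ≤ k := hk2
      rcases eq_or_lt_of_le hp2 with hpe | hp3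
      · -- p = 2
        have hpeq : p = 2 := hpe.symm
        subst hpeq
        have hk3 : 3 ≤ k := by
          by_contra h
          push_neg at h
          have : k = 2 := by omega
          subst this
          rw [hk] at h64
          norm_num at h64
        have hb8 : (8:ℝ) ≤ (2:ℝ)^k := by
          calc (8:ℝ) = 2^3 := by norm_num
          _ ≤ (2:ℝ)^k := pow_le_pow_right₀ (by norm_num) hk3
        have hA := case2a hb8
        have e1 : ((2:ℕ):ℝ)^(k+1 : ℕ) = 2 * (2:ℝ)^k := by push_cast; ring
        have e2 : ((2:ℕ):ℝ)^(k : ℕ) = (2:ℝ)^k := by push_cast; ring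
        rw [e1, e2, hlog, e2]
        have e3 : Real.log ((2:ℕ):ℝ) = Real.log 2 := by norm_num
        rw [e3]
        exact hA
      · -- p ≥ 3
        have hp3' : 3 ≤ p := hp3
        have hp3R : (3:ℝ) ≤ (p:ℝ) := by exact_mod_cast hp3'
        have hb9 : (9:ℕ) ≤ p^k := by
          calc (9:ℕ) = 3^2 := by norm_num
          _ ≤ p^2 := Nat.pow_le_pow_left hp3' 2
          _ ≤ p^k := Nat.pow_le_pow_right (by omega) hk2'
        have hb9R : (9:ℝ) ≤ (p:ℝ)^k := by exact_mod_cast hb9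
        have hpbR : (p:ℝ) ≤ (p:ℝ)^k := by
          calc (p:ℝ) = (p:ℝ)^1 := by norm_num
          _ ≤ (p:ℝ)^k := pow_le_pow_right₀ (by linarith) hk1'
        have hB := case2b hp3R hpbR hb9R
        have e1 : (p:ℝ)^(k+1 : ℕ) = (p:ℝ) * (p:ℝ)^k := by ring
        rw [e1, hlog]
        exact hB

end TvzGv

theorem tvz_beats_gv_at_rate_half
    (q : ℕ) (hq : IsPrimePow q) (hnp : ¬ q.Prime) (hq64 : 64 ≤ q) (hq125 : q ≠ 125) :
    ∃ ℓ r : ℕ, IsPrimePow ℓ ∧ 1 < r ∧ q = ℓ ^ r ∧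
      (1 - qaryEntropy q (1 / 2 - (1 / 2) *
          (1 / ((ℓ : ℝ) ^ ((r + 1) / 2 : ℕ) - 1) + 1 / ((ℓ : ℝ) ^ (r / 2 : ℕ) - 1)))
        < 1 / 2) ∧
      ∀ δ₀ : ℝ, 0 < δ₀ → δ₀ ≤ 1 - 1 / q → 1 - qaryEntropy q δ₀ = 1 / 2 →
        δ₀ < 1 / 2 - (1 / 2) *
          (1 / ((ℓ : ℝ) ^ ((r + 1) / 2 : ℕ) - 1) + 1 / ((ℓ : ℝ) ^ (r / 2 : ℕ) - 1)) := by
  obtain ⟨p, s, hpp, hs0, hqe⟩ := hq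
  have hp : p.Prime := hpp.nat_prime
  have hs2 : 2 ≤ s := by
    by_contra h
    push_neg at h
    have : s = 1 := by omega
    subst this
    simp at hqe
    subst hqe
    exact hnp hp
  subst hqe
  set ε := (1/2:ℝ) * (1/((p:ℝ)^((s+1)/2 : ℕ) - 1) + 1/((p:ℝ)^(s/2 : ℕ) - 1)) with hεdef
  obtain ⟨hε0, hε7, hεl⟩ := TvzGv.eps_spec p s hp hs2 hq64 hq125
  have hlogcast : Real.log ((p^s : ℕ) : ℝ) = Real.log ((p:ℝ)^s) := by push_cast; ring_nf
  have hεl' : ε * Real.log ((p^s : ℕ) : ℝ) ≤ 3/5 := by rw [hlogcast]; exact hεl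
  have hmain : 1/2 < qaryEntropy (p^s) (1/2 - ε) :=
    TvzGv.entropy_gt (p^s) hq64 ε hε0 hε7 hεl'
  refine ⟨p, s, hp.isPrimePow, by omega, rfl, by rw [← hεdef]; linarith, ?_⟩
  intro δ₀ hδ0 hδ1 hδhalf
  rw [← hεdef]
  by_contra hcon
  push_neg at hcon
  -- hcon : 1/2 - ε ≤ δ₀
  have hq2 : (2:ℕ) ≤ p^s := le_trans (by norm_num) hq64
  have hQR : (64:ℝ) ≤ ((p^s : ℕ):ℝ) := by exact_mod_cast hq64
  have hL : (0:ℝ) < Real.log ((p^s : ℕ):ℝ) := Real.log_pos (by linarith)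
  have hmem1 : (1/2 - ε) ∈ Set.Icc (0:ℝ) (1 - 1/((p^s:ℕ):ℝ)) := by
    constructor
    · linarith
    · have : 1/((p^s:ℕ):ℝ) ≤ 1/2 := by
        rw [div_le_div_iff₀ (by linarith) (by norm_num)]; linarith
      linarith
  have hmem0 : δ₀ ∈ Set.Icc (0:ℝ) (1 - 1/((p^s:ℕ):ℝ)) := ⟨hδ0.le, hδ1⟩
  have hmono := (Real.qaryEntropy_strictMonoOn (q := p^s) hq2).monotoneOn hmem1 hmem0 hcon
  -- translate to our qaryEntropy
  have hb1 := TvzGv.bridge (p^s) (1/2 - ε)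
  have hb0 := TvzGv.bridge (p^s) δ₀
  have h0 : qaryEntropy (p^s) δ₀ = 1/2 := by linarith
  have : qaryEntropy (p^s) (1/2 - ε) ≤ qaryEntropy (p^s) δ₀ := by
    rw [hb1, hb0]
    gcongr
  linarith
end
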